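/- arXiv:1909.00163 — 2 statements merged into one kernel-verified Lean document; each statement's English description precedes it below -/
import Mathlib

section
/- For α > 0, x ∈ ℝ, and x₀ ∈ ℝ with x ≤ x₀, the resolvent integral ∫₀^∞ e^{-αt} ∫_{x₀}^∞ y · e^{-(y-x)²/(2t)}/√(2πt) dy dt equals e^{-√(2α)(x₀-x)} · (1/(2α√(2α)) + x₀/(2α)). -/
/-!
After swapping the two integrals, the inner `t`-integral is the Laplace transform of the heat
kernel, `∫₀^∞ e^{-αt} e^{-b²/(2t)} / √(2πt) dt = e^{-√(2α) b} / √(2α)` for `b > 0`. The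
substitution `t = u²` turns it into `∫₀^∞ e^{-(a u² + c / u²)} du = ½ √(π/a) e^{-2√(ac)}`: with
`r = √(c/a)` the integrand is invariant under `u ↦ r / u`, so twice the integral is
`∫₀^∞ (1 + r/u²) e^{-(a u² + c/u²)} du`, and `v = u - r/u` makes this
`e^{-2√(ac)} ∫ e^{-a v²} dv`. What is left is the elementary integral of `y e^{-√(2α)(y-x)}`
over `(x₀, ∞)`.
-/

open MeasureTheory Real Set Filter Topology

section ExpTail

variable {a : ℝ}

lemma hasDerivAt_exp_mul_mul_sub (ha : a < 0) (c y : ℝ) :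
    HasDerivAt (fun y => exp (a * y) * ((y - c) / a - 1 / a ^ 2))
      ((y - c) * exp (a * y)) y := by
  have h := (((hasDerivAt_id y).const_mul a).exp).mul
    ((((hasDerivAt_id y).sub_const c).div_const a).sub_const (1 / a ^ 2))
  refine h.congr_deriv ?_
  simp only [id]
  field_simp [ha.ne]
  ring

lemma tendsto_exp_mul_mul_sub_atTop (ha : a < 0) (c : ℝ) :
    Tendsto (fun y => exp (a * y) * ((y - c) / a - 1 / a ^ 2)) atTop (𝓝 0) := by
  have hlin : Tendsto (fun y => a * y) atTop atBot := tendsto_id.const_mul_atTop_of_neg ha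
  have hexp : Tendsto (fun y => exp (a * y)) atTop (𝓝 0) := tendsto_exp_atBot.comp hlin
  have hmul : Tendsto (fun y => a * y * exp (a * y)) atTop (𝓝 0) := by
    simpa [Function.comp_def] using
      (((tendsto_pow_mul_exp_neg_atTop_nhds_zero 1).comp (tendsto_neg_atBot_atTop.comp hlin)).neg)
  have := (hmul.div_const (a ^ 2)).sub (hexp.mul_const ((c / a + 1 / a ^ 2)))
  refine (this.congr fun y => ?_).trans (by simp)
  field_simp [ha.ne]
  ring

lemma integrableOn_sub_mul_exp_mul_Ioi (ha : a < 0) (c : ℝ) :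
    IntegrableOn (fun y => (y - c) * exp (a * y)) (Ioi c) :=
  integrableOn_Ioi_deriv_of_nonneg' (fun y _ => hasDerivAt_exp_mul_mul_sub ha c y)
    (fun _ hy => mul_nonneg (sub_nonneg.2 (le_of_lt hy)) (exp_pos _).le)
    (tendsto_exp_mul_mul_sub_atTop ha c)

lemma integral_sub_mul_exp_mul_Ioi (ha : a < 0) (c : ℝ) :
    ∫ y in Ioi c, (y - c) * exp (a * y) = exp (a * c) / a ^ 2 := by
  rw [integral_Ioi_of_hasDerivAt_of_nonneg' (fun y _ => hasDerivAt_exp_mul_mul_sub ha c y)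
    (fun _ hy => mul_nonneg (sub_nonneg.2 (le_of_lt hy)) (exp_pos _).le)
    (tendsto_exp_mul_mul_sub_atTop ha c)]
  ring

lemma integrableOn_mul_exp_mul_Ioi (ha : a < 0) (c : ℝ) :
    IntegrableOn (fun y => y * exp (a * y)) (Ioi c) := by
  refine ((integrableOn_sub_mul_exp_mul_Ioi ha c).add
    ((integrableOn_exp_mul_Ioi ha c).const_mul c)).congr_fun (fun y _ => ?_) measurableSet_Ioi
  simp only [Pi.add_apply]
  ring

lemma integral_mul_exp_mul_Ioi (ha : a < 0) (c : ℝ) :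
    ∫ y in Ioi c, y * exp (a * y) = exp (a * c) * (1 / a ^ 2 - c / a) := by
  have hsplit : ∀ y, y * exp (a * y) = (y - c) * exp (a * y) + c * exp (a * y) := fun y => by ring
  simp_rw [hsplit]
  rw [integral_add (integrableOn_sub_mul_exp_mul_Ioi ha c)
    ((integrableOn_exp_mul_Ioi ha c).const_mul c), integral_const_mul,
    integral_sub_mul_exp_mul_Ioi ha, integral_exp_mul_Ioi ha]
  ring

end ExpTail

section Substitution

variable {E : Type*} [NormedAddCommGroup E] [NormedSpace ℝ E] {r : ℝ}

lemma image_sq_Ioi : (fun x : ℝ => x ^ 2) '' Ioi 0 = Ioi 0 := by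
  ext y
  refine ⟨fun ⟨x, hx, hxy⟩ => hxy ▸ pow_pos (mem_Ioi.1 hx) 2, fun hy => ?_⟩
  exact ⟨√y, sqrt_pos.2 hy, sq_sqrt (le_of_lt hy)⟩

lemma injOn_sq_Ioi : InjOn (fun x : ℝ => x ^ 2) (Ioi 0) :=
  fun _ hx _ hy h => (pow_left_inj₀ (le_of_lt hx) (le_of_lt hy) two_ne_zero).1 h

lemma integral_comp_sq_Ioi (g : ℝ → E) :
    ∫ x in Ioi 0, (2 * x) • g (x ^ 2) = ∫ y in Ioi 0, g y := by
  conv_rhs => rw [← image_sq_Ioi, integral_image_eq_integral_abs_deriv_smul measurableSet_Ioi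
    (fun x _ => (hasDerivAt_pow 2 x).hasDerivWithinAt) injOn_sq_Ioi]
  refine setIntegral_congr_fun measurableSet_Ioi fun x hx => ?_
  simp [abs_of_pos (mem_Ioi.1 hx)]

lemma integrableOn_comp_sq_Ioi (g : ℝ → E) :
    IntegrableOn (fun x => (2 * x) • g (x ^ 2)) (Ioi 0) ↔ IntegrableOn g (Ioi 0) := by
  conv_rhs => rw [← image_sq_Ioi, integrableOn_image_iff_integrableOn_abs_deriv_smul
    measurableSet_Ioi (fun x _ => (hasDerivAt_pow 2 x).hasDerivWithinAt) injOn_sq_Ioi]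
  refine integrableOn_congr_fun (fun x hx => ?_) measurableSet_Ioi
  simp [abs_of_pos (mem_Ioi.1 hx)]

lemma hasDerivAt_const_div (r : ℝ) {x : ℝ} (hx : x ≠ 0) :
    HasDerivAt (fun x => r / x) (-(r / x ^ 2)) x := by
  simpa [div_eq_mul_inv] using (hasDerivAt_inv hx).const_mul r

lemma image_div_Ioi (hr : 0 < r) : (fun x => r / x) '' Ioi 0 = Ioi 0 := by
  ext y
  refine ⟨fun ⟨x, hx, hxy⟩ => hxy ▸ div_pos hr hx, fun hy => ?_⟩
  exact ⟨r / y, div_pos hr hy, div_div_cancel₀ hr.ne'⟩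

lemma injOn_div_Ioi (hr : 0 < r) : InjOn (fun x => r / x) (Ioi 0) :=
  fun _ _ _ _ h => by simpa [div_eq_mul_inv, hr.ne'] using h

lemma integral_comp_div_Ioi (g : ℝ → E) (hr : 0 < r) :
    ∫ x in Ioi 0, (r / x ^ 2) • g (r / x) = ∫ y in Ioi 0, g y := by
  conv_rhs => rw [← image_div_Ioi hr, integral_image_eq_integral_abs_deriv_smul measurableSet_Ioi
    (fun x hx => (hasDerivAt_const_div r (ne_of_gt hx)).hasDerivWithinAt) (injOn_div_Ioi hr)]
  refine setIntegral_congr_fun measurableSet_Ioi fun x hx => ?_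
  have : 0 < r / x ^ 2 := div_pos hr (pow_pos hx 2)
  simp [abs_of_pos this]

lemma integrableOn_comp_div_Ioi (g : ℝ → E) (hr : 0 < r) :
    IntegrableOn (fun x => (r / x ^ 2) • g (r / x)) (Ioi 0) ↔ IntegrableOn g (Ioi 0) := by
  conv_rhs => rw [← image_div_Ioi hr, integrableOn_image_iff_integrableOn_abs_deriv_smul
    measurableSet_Ioi (fun x hx => (hasDerivAt_const_div r (ne_of_gt hx)).hasDerivWithinAt)
    (injOn_div_Ioi hr)]
  refine integrableOn_congr_fun (fun x hx => ?_) measurableSet_Ioi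
  have : 0 < r / x ^ 2 := div_pos hr (pow_pos hx 2)
  simp [abs_of_pos this]

lemma hasDerivAt_sub_div (r : ℝ) {x : ℝ} (hx : x ≠ 0) :
    HasDerivAt (fun x => x - r / x) (1 + r / x ^ 2) x :=
  ((hasDerivAt_id' x).sub (hasDerivAt_const_div r hx)).congr_deriv (sub_neg_eq_add _ _)

lemma image_sub_div_Ioi (hr : 0 < r) : (fun x => x - r / x) '' Ioi 0 = univ := by
  refine eq_univ_of_forall fun v => ?_
  set w := √(v ^ 2 + 4 * r)
  have hw : w ^ 2 = v ^ 2 + 4 * r := sq_sqrt (by positivity)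
  have hvw : |v| < w := by
    rw [← sqrt_sq_eq_abs]
    exact sqrt_lt_sqrt (sq_nonneg v) (by linarith)
  have hx : 0 < (v + w) / 2 := by linarith [neg_abs_le v]
  refine ⟨(v + w) / 2, hx, ?_⟩
  have hdiv : r / ((v + w) / 2) = (w - v) / 2 := by
    rw [div_eq_iff hx.ne']
    linear_combination (-1 / 4 : ℝ) * hw
  simp only [hdiv]
  ring

lemma strictMonoOn_sub_div_Ioi (hr : 0 < r) : StrictMonoOn (fun x => x - r / x) (Ioi 0) :=
  fun _ hx _ _ hxy => sub_lt_sub hxy (div_lt_div_of_pos_left hr hx hxy)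

lemma integral_comp_sub_div_Ioi (g : ℝ → E) (hr : 0 < r) :
    ∫ x in Ioi 0, (1 + r / x ^ 2) • g (x - r / x) = ∫ y, g y := by
  conv_rhs => rw [← setIntegral_univ, ← image_sub_div_Ioi hr,
    integral_image_eq_integral_abs_deriv_smul measurableSet_Ioi
      (fun x hx => (hasDerivAt_sub_div r (ne_of_gt hx)).hasDerivWithinAt)
      (strictMonoOn_sub_div_Ioi hr).injOn]
  refine setIntegral_congr_fun measurableSet_Ioi fun x hx => ?_
  have : 0 < 1 + r / x ^ 2 := by have := mem_Ioi.1 hx; positivity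
  simp [abs_of_pos this]

end Substitution

lemma integrableOn_exp_neg_mul_sq_add_div_sq {a c : ℝ} (ha : 0 < a) (hc : 0 ≤ c) :
    IntegrableOn (fun u => exp (-(a * u ^ 2 + c / u ^ 2))) (Ioi 0) := by
  refine (integrable_exp_neg_mul_sq ha).integrableOn.mono' (by fun_prop) ?_
  refine (ae_restrict_iff' measurableSet_Ioi).2 (ae_of_all _ fun u _ => ?_)
  rw [norm_of_nonneg (exp_pos _).le, exp_le_exp]
  have : 0 ≤ c / u ^ 2 := by positivity
  linarith

theorem integral_exp_neg_mul_sq_add_div_sq_Ioi {a c : ℝ} (ha : 0 < a) (hc : 0 < c) :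
    ∫ u in Ioi 0, exp (-(a * u ^ 2 + c / u ^ 2)) = √(π / a) / 2 * exp (-2 * √(a * c)) := by
  set g : ℝ → ℝ := fun u => exp (-(a * u ^ 2 + c / u ^ 2))
  set r := √(c / a)
  have hr : 0 < r := sqrt_pos.2 (div_pos hc ha)
  have har2 : a * r ^ 2 = c := by rw [sq_sqrt (div_pos hc ha).le]; field_simp
  have har : a * r = √(a * c) := by
    rw [← har2, show a * (a * r ^ 2) = (a * r) ^ 2 by ring, sqrt_sq (by positivity)]
  have hg_inv : ∀ u ∈ Ioi (0 : ℝ), g (r / u) = g u := fun u hu => by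
    have := (mem_Ioi.1 hu).ne'
    simp only [g, ← har2]
    field_simp
    ring_nf
  have hg_sq : ∀ u ∈ Ioi (0 : ℝ),
      (1 + r / u ^ 2) * g u
        = exp (-2 * √(a * c)) * ((1 + r / u ^ 2) * exp (-a * (u - r / u) ^ 2)) := fun u hu => by
    have := (mem_Ioi.1 hu).ne'
    rw [mul_left_comm, ← exp_add, ← har]
    simp only [g, ← har2]
    congr 2
    field_simp
    ring
  have hg : IntegrableOn g (Ioi 0) := integrableOn_exp_neg_mul_sq_add_div_sq ha hc.le
  have hg_div : ∫ u in Ioi 0, r / u ^ 2 * g u = ∫ u in Ioi 0, g u := by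
    rw [← integral_comp_div_Ioi g hr]
    exact setIntegral_congr_fun measurableSet_Ioi fun u hu => by
      simp only [smul_eq_mul, hg_inv u hu]
  have hg_div_int : IntegrableOn (fun u => r / u ^ 2 * g u) (Ioi 0) := by
    refine ((integrableOn_comp_div_Ioi g hr).2 hg).congr_fun (fun u hu => ?_) measurableSet_Ioi
    simp only [smul_eq_mul, hg_inv u hu]
  have : 2 * ∫ u in Ioi 0, g u = exp (-2 * √(a * c)) * √(π / a) := calc
    2 * ∫ u in Ioi 0, g u = ∫ u in Ioi 0, (1 + r / u ^ 2) * g u := by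
      simp only [add_mul, one_mul]
      rw [integral_add hg hg_div_int, hg_div]
      ring
    _ = exp (-2 * √(a * c)) * ∫ u in Ioi 0, (1 + r / u ^ 2) * exp (-a * (u - r / u) ^ 2) := by
      rw [setIntegral_congr_fun measurableSet_Ioi hg_sq, integral_const_mul]
    _ = exp (-2 * √(a * c)) * √(π / a) := by
      rw [← integral_gaussian a, ← integral_comp_sub_div_Ioi (fun y => exp (-a * y ^ 2)) hr]
      rfl
  linarith

noncomputable def heatKernel (t b : ℝ) : ℝ := exp (-b ^ 2 / (2 * t)) / √(2 * π * t)

lemma heatKernel_nonneg (t b : ℝ) : 0 ≤ heatKernel t b :=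
  div_nonneg (exp_pos _).le (sqrt_nonneg _)

lemma measurable_heatKernel : Measurable (Function.uncurry heatKernel) := by
  unfold Function.uncurry heatKernel
  fun_prop

lemma mul_heatKernel_sq {α : ℝ} (b : ℝ) {u : ℝ} (hu : 0 < u) :
    (2 * u) • (exp (-α * u ^ 2) * heatKernel (u ^ 2) b)
      = 2 / √(2 * π) * exp (-(α * u ^ 2 + b ^ 2 / 2 / u ^ 2)) := by
  have hsqrt : √(2 * π * u ^ 2) = √(2 * π) * u := by
    rw [sqrt_mul (by positivity), sqrt_sq hu.le]
  have : 0 < √(2 * π) := sqrt_pos.2 (by positivity)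
  rw [heatKernel, hsqrt, smul_eq_mul, mul_div_assoc', ← exp_add]
  field_simp
  ring_nf

lemma integrableOn_exp_neg_mul_mul_heatKernel {α : ℝ} (hα : 0 < α) (b : ℝ) :
    IntegrableOn (fun t => exp (-α * t) * heatKernel t b) (Ioi 0) := by
  refine (integrableOn_comp_sq_Ioi _).1 ?_
  refine IntegrableOn.congr_fun ?_ (fun u hu => (mul_heatKernel_sq b hu).symm) measurableSet_Ioi
  exact (integrableOn_exp_neg_mul_sq_add_div_sq hα (by positivity)).const_mul _

theorem integral_exp_neg_mul_mul_heatKernel {α b : ℝ} (hα : 0 < α) (hb : 0 < b) :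
    ∫ t in Ioi 0, exp (-α * t) * heatKernel t b = exp (-√(2 * α) * b) / √(2 * α) := by
  rw [← integral_comp_sq_Ioi, setIntegral_congr_fun measurableSet_Ioi
    (fun u hu => mul_heatKernel_sq b hu), integral_const_mul,
    integral_exp_neg_mul_sq_add_div_sq_Ioi hα (by positivity)]
  have hroot : √(α * (b ^ 2 / 2)) = √(2 * α) * b / 2 := by
    rw [← sqrt_sq (by positivity : 0 ≤ √(2 * α) * b / 2), div_pow, mul_pow,
      sq_sqrt (by positivity)]
    ring_nf
  have hprod : √(π / α) * √(2 * α) = √(2 * π) := by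
    rw [← sqrt_mul (by positivity)]
    field_simp
  have : 0 < √(2 * α) := sqrt_pos.2 (by positivity)
  have : 0 < √(2 * π) := sqrt_pos.2 (by positivity)
  rw [hroot, ← hprod]
  field_simp

theorem integral_exp_neg_mul_mul_integral_mul_heatKernel {f : ℝ → ℝ} {α x x₀ : ℝ} (hα : 0 < α)
    (hx : x ≤ x₀) (hf : IntegrableOn (fun y => f y * exp (-√(2 * α) * (y - x))) (Ioi x₀)) :
    ∫ t in Ioi 0, exp (-α * t) * ∫ y in Ioi x₀, f y * heatKernel t (y - x)
      = ∫ y in Ioi x₀, f y * exp (-√(2 * α) * (y - x)) / √(2 * α) := by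
  set F : ℝ → ℝ → ℝ := fun t y => exp (-α * t) * (f y * heatKernel t (y - x))
  have hF_inner : ∀ c, ∀ y ∈ Ioi x₀, ∫ t in Ioi 0, exp (-α * t) * (c * heatKernel t (y - x))
      = c * exp (-√(2 * α) * (y - x)) / √(2 * α) := fun c y hy => by
    simp only [mul_left_comm _ c, integral_const_mul]
    rw [integral_exp_neg_mul_mul_heatKernel hα (by linarith [mem_Ioi.1 hy]), mul_div_assoc]
  have hf_meas : AEStronglyMeasurable f (volume.restrict (Ioi x₀)) := by
    refine (hf.aestronglyMeasurable.mul (by fun_prop :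
      Continuous fun y => exp (√(2 * α) * (y - x))).aestronglyMeasurable).congr
      (ae_of_all _ fun y => ?_)
    change f y * exp (-√(2 * α) * (y - x)) * exp (√(2 * α) * (y - x)) = f y
    rw [mul_assoc, ← exp_add, neg_mul, neg_add_cancel, exp_zero, mul_one]
  have hF_meas : AEStronglyMeasurable (Function.uncurry F)
      ((volume.restrict (Ioi 0)).prod (volume.restrict (Ioi x₀))) :=
    (by fun_prop : Continuous fun p : ℝ × ℝ => exp (-α * p.1)).aestronglyMeasurable.mul
      (hf_meas.comp_snd.mul (measurable_heatKernel.comp (by fun_prop :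
        Measurable fun p : ℝ × ℝ => (p.1, p.2 - x))).aestronglyMeasurable)
  have hF_int : Integrable (Function.uncurry F)
      ((volume.restrict (Ioi 0)).prod (volume.restrict (Ioi x₀))) := by
    refine (integrable_prod_iff' hF_meas).2 ⟨?_, ?_⟩
    · refine (ae_restrict_iff' measurableSet_Ioi).2 (ae_of_all _ fun y _ => ?_)
      refine ((integrableOn_exp_neg_mul_mul_heatKernel hα (y - x)).const_mul (f y)).congr
        (ae_of_all _ fun t => ?_)
      simp only [F, Function.uncurry_apply_pair]
      ring
    · refine (hf.norm.div_const (√(2 * α))).congr ?_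
      refine (ae_restrict_iff' measurableSet_Ioi).2 (ae_of_all _ fun y hy => ?_)
      have hnorm : ∀ t, ‖Function.uncurry F (t, y)‖
          = exp (-α * t) * (‖f y‖ * heatKernel t (y - x)) := fun t => by
        simp only [F, Function.uncurry_apply_pair, norm_mul, norm_of_nonneg (exp_pos _).le,
          norm_of_nonneg (heatKernel_nonneg _ _)]
      simp only [hnorm, hF_inner _ y hy, norm_mul, norm_of_nonneg (exp_pos _).le]
  calc ∫ t in Ioi 0, exp (-α * t) * ∫ y in Ioi x₀, f y * heatKernel t (y - x)
      = ∫ t in Ioi 0, ∫ y in Ioi x₀, F t y := by simp only [F, integral_const_mul]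
    _ = ∫ y in Ioi x₀, ∫ t in Ioi 0, F t y := integral_integral_swap hF_int
    _ = ∫ y in Ioi x₀, f y * exp (-√(2 * α) * (y - x)) / √(2 * α) :=
      setIntegral_congr_fun measurableSet_Ioi fun y hy => hF_inner (f y) y hy

/-- Resolvent integral for x ≤ x₀:
∫₀^∞ e^{-αt} ∫_{x₀}^∞ y e^{-(y-x)²/(2t)}/√(2πt) dy dt
  = e^{-√(2α)(x₀-x)} (1/(2α√(2α)) + x₀/(2α)). -/
theorem stmt12 (α x x₀ : ℝ) (hα : 0 < α) (hx : x ≤ x₀) :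
    ∫ t in Ioi (0:ℝ), Real.exp (-α * t) *
        ∫ y in Ioi x₀, y * Real.exp (-(y - x) ^ 2 / (2 * t)) / Real.sqrt (2 * π * t)
      = Real.exp (-Real.sqrt (2 * α) * (x₀ - x))
          * (1 / (2 * α * Real.sqrt (2 * α)) + x₀ / (2 * α)) := by
  have hs : 0 < √(2 * α) := sqrt_pos.2 (by positivity)
  have hshift : ∀ y, y * exp (-√(2 * α) * (y - x))
      = exp (√(2 * α) * x) * (y * exp (-√(2 * α) * y)) := fun y => by
    rw [mul_left_comm, ← exp_add]
    ring_nf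
  have hint : IntegrableOn (fun y => y * exp (-√(2 * α) * (y - x))) (Ioi x₀) := by
    refine IntegrableOn.congr_fun ?_ (fun y _ => (hshift y).symm) measurableSet_Ioi
    exact (integrableOn_mul_exp_mul_Ioi (neg_neg_of_pos hs) x₀).const_mul _
  have hkernel : ∀ t y, y * exp (-(y - x) ^ 2 / (2 * t)) / √(2 * π * t)
      = y * heatKernel t (y - x) := fun t y => mul_div_assoc _ _ _
  simp only [hkernel]
  rw [integral_exp_neg_mul_mul_integral_mul_heatKernel hα hx hint, integral_div]
  simp only [hshift]
  have hexp : exp (-√(2 * α) * (x₀ - x)) = exp (-√(2 * α) * x₀) * exp (√(2 * α) * x) := by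
    rw [← exp_add]
    ring_nf
  have hs2 : √(2 * α) ^ 2 = 2 * α := sq_sqrt (by positivity)
  rw [integral_const_mul, integral_mul_exp_mul_Ioi (neg_neg_of_pos hs), hexp]
  field_simp
  linear_combination (-1 - √(2 * α) * x₀) * hs2
end

section
/- For α > 0 and 0 ≤ x, the Gaussian integral identity ∫₀^∞ e^{-αt} ∫_{x₀}^∞ y·(e^{-(y-x)²/(2t)} + e^{-(y+x)²/(2t)})/√(2πt) dy dt = (1/α)·(1/(2√(2α)) + x₀/2)·e^{-√(2α)x₀}·(e^{√(2α)x} + e^{-√(2α)x}) holds whenever 0 ≤ x < x₀. -/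
/-!
Integrate in `t` first (Tonelli; the integrand is nonnegative). With `t = s²` the exponent of
`e^{-at} p_t(b)` becomes `-√(2a) b - (√a s - b/(√2 s))²`, so everything reduces to the
Cauchy–Schlömilch integral `∫₀^∞ e^{-(cs - k/s)²} ds = √π/(2c)`. Substituting `u = cs - k/s`, the
Jacobians `ds/du` at `u` and at `-u` add up to `1/c`, and the symmetry of `e^{-u²}` gives the value.
Hence `∫₀^∞ e^{-at} p_t(b) dt = e^{-√(2a) b}/√(2a)` for `b > 0`; for `y > x₀ > x ≥ 0` both reflected
terms are of this form, and what remains is `∫_{x₀}^∞ y e^{-√(2α) y} dy`.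
-/

open MeasureTheory Real Set Filter Topology

lemma abs_lt_sqrt_sq_add {q : ℝ} (hq : 0 < q) (u : ℝ) : |u| < √(u ^ 2 + q) := by
  rw [← sqrt_sq_eq_abs]
  exact sqrt_lt_sqrt (sq_nonneg u) (by linarith)

section CauchySchlomilch

variable {c k : ℝ}

/-- The inverse of `s ↦ c * s - k / s : (0, ∞) → ℝ`: the positive root of `c s² - u s - k`. -/
noncomputable def schlomilchInv (c k u : ℝ) : ℝ := (u + √(u ^ 2 + 4 * c * k)) / (2 * c)

lemma schlomilchInv_add_schlomilchInv_neg (u : ℝ) :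
    schlomilchInv c k u + schlomilchInv c k (-u) = √(u ^ 2 + 4 * c * k) / c := by
  rw [schlomilchInv, schlomilchInv, neg_sq]
  field_simp
  ring

variable (hc : 0 < c) (hk : 0 < k)
include hc hk

lemma schlomilchInv_pos (u : ℝ) : 0 < schlomilchInv c k u := by
  have := abs_lt_sqrt_sq_add (by positivity : 0 < 4 * c * k) u
  unfold schlomilchInv
  exact div_pos (by linarith [neg_le_abs u]) (by positivity)

lemma mul_schlomilchInv_sub_div (u : ℝ) :
    c * schlomilchInv c k u - k / schlomilchInv c k u = u := by
  have hnum : u + √(u ^ 2 + 4 * c * k) ≠ 0 :=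
    ((div_pos_iff_of_pos_right (by positivity)).1 (schlomilchInv_pos hc hk u)).ne'
  have hsq : √(u ^ 2 + 4 * c * k) ^ 2 = u ^ 2 + 4 * c * k := sq_sqrt (by positivity)
  unfold schlomilchInv
  generalize √(u ^ 2 + 4 * c * k) = s at hsq hnum ⊢
  field_simp
  linear_combination hsq

lemma range_schlomilchInv : range (schlomilchInv c k) = Ioi 0 := by
  refine Set.Subset.antisymm (range_subset_iff.2 (schlomilchInv_pos hc hk)) fun y (hy : 0 < y) => ?_
  refine ⟨c * y - k / y, ?_⟩
  have hsq : (c * y - k / y) ^ 2 + 4 * c * k = (c * y + k / y) ^ 2 := by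
    field_simp; ring
  rw [schlomilchInv, hsq, sqrt_sq (by positivity)]
  field_simp
  ring

lemma hasDerivAt_schlomilchInv (u : ℝ) :
    HasDerivAt (schlomilchInv c k) (schlomilchInv c k u / √(u ^ 2 + 4 * c * k)) u := by
  have hq : u ^ 2 + 4 * c * k ≠ 0 := by positivity
  have hs : √(u ^ 2 + 4 * c * k) ≠ 0 := by positivity
  have h := (hasDerivAt_id u).add (((hasDerivAt_pow 2 u).add_const (4 * c * k)).sqrt hq)
  refine (h.div_const (2 * c)).congr_deriv ?_
  unfold schlomilchInv
  field_simp
  ring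

lemma strictMono_schlomilchInv : StrictMono (schlomilchInv c k) :=
  strictMono_of_hasDerivAt_pos (hasDerivAt_schlomilchInv hc hk) fun u =>
    div_pos (schlomilchInv_pos hc hk u) (by positivity)

section Substitution

variable {E : Type*} [NormedAddCommGroup E] [NormedSpace ℝ E]

lemma abs_deriv_smul_comp_schlomilchInv (g : ℝ → E) :
    (fun u => |schlomilchInv c k u / √(u ^ 2 + 4 * c * k)|
        • g (c * schlomilchInv c k u - k / schlomilchInv c k u))
      = fun u => (schlomilchInv c k u / √(u ^ 2 + 4 * c * k)) • g u := by
  ext u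
  rw [abs_of_pos (div_pos (schlomilchInv_pos hc hk u) (by positivity)),
    mul_schlomilchInv_sub_div hc hk]

lemma integral_comp_mul_sub_div (g : ℝ → E) :
    ∫ s in Ioi 0, g (c * s - k / s)
      = ∫ u, (schlomilchInv c k u / √(u ^ 2 + 4 * c * k)) • g u := by
  have h := integral_image_eq_integral_abs_deriv_smul MeasurableSet.univ
    (fun u _ => (hasDerivAt_schlomilchInv hc hk u).hasDerivWithinAt)
    (strictMono_schlomilchInv hc hk).injective.injOn fun s => g (c * s - k / s)
  rwa [image_univ, range_schlomilchInv hc hk, Measure.restrict_univ,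
    abs_deriv_smul_comp_schlomilchInv hc hk] at h

lemma integrableOn_comp_mul_sub_div_iff (g : ℝ → E) :
    IntegrableOn (fun s => g (c * s - k / s)) (Ioi 0)
      ↔ Integrable fun u => (schlomilchInv c k u / √(u ^ 2 + 4 * c * k)) • g u := by
  have h := integrableOn_image_iff_integrableOn_abs_deriv_smul MeasurableSet.univ
    (fun u _ => (hasDerivAt_schlomilchInv hc hk u).hasDerivWithinAt)
    (strictMono_schlomilchInv hc hk).injective.injOn fun s => g (c * s - k / s)
  rwa [image_univ, range_schlomilchInv hc hk, integrableOn_univ,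
    abs_deriv_smul_comp_schlomilchInv hc hk] at h

end Substitution

lemma integrableOn_exp_neg_sq_mul_sub_div :
    IntegrableOn (fun s => exp (-(c * s - k / s) ^ 2)) (Ioi 0) := by
  rw [integrableOn_comp_mul_sub_div_iff hc hk (fun u => exp (-u ^ 2))]
  have hcont : Continuous (schlomilchInv c k) :=
    continuous_iff_continuousAt.2 fun u => (hasDerivAt_schlomilchInv hc hk u).continuousAt
  refine Integrable.mono' ((integrable_exp_neg_mul_sq one_pos).const_mul (1 / c))
    (((hcont.div (by fun_prop) fun u => by positivity).smul (by fun_prop)).aestronglyMeasurable)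
    (ae_of_all _ fun u => ?_)
  have hf := schlomilchInv_pos hc hk u
  have hs : 0 < √(u ^ 2 + 4 * c * k) := by positivity
  have hu := (le_abs_self u).trans_lt (abs_lt_sqrt_sq_add (by positivity : 0 < 4 * c * k) u)
  rw [smul_eq_mul, norm_of_nonneg (by positivity), neg_one_mul]
  refine mul_le_mul_of_nonneg_right ?_ (exp_pos _).le
  rw [div_le_div_iff₀ hs hc, schlomilchInv, div_mul_eq_mul_div, div_le_iff₀ (by positivity)]
  nlinarith

lemma integral_exp_neg_sq_mul_sub_div :
    ∫ s in Ioi 0, exp (-(c * s - k / s) ^ 2) = √π / (2 * c) := by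
  set w : ℝ → ℝ := fun u => (schlomilchInv c k u / √(u ^ 2 + 4 * c * k)) • exp (-u ^ 2)
  have hw : Integrable w := (integrableOn_comp_mul_sub_div_iff hc hk (fun u => exp (-u ^ 2))).1
    (integrableOn_exp_neg_sq_mul_sub_div hc hk)
  have hsym : ∫ u, w u + w (-u) = √π / c := by
    have hpt : ∀ u, w u + w (-u) = c⁻¹ * exp (-u ^ 2) := fun u => by
      have hs : √(u ^ 2 + 4 * c * k) ≠ 0 := by positivity
      simp only [w, smul_eq_mul, neg_sq]
      rw [← add_mul, ← add_div, schlomilchInv_add_schlomilchInv_neg, div_div_cancel_left' hs]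
    simp only [hpt, integral_const_mul]
    rw [show (fun u : ℝ => exp (-u ^ 2)) = fun u => exp (-1 * u ^ 2) by simp, integral_gaussian]
    field_simp
  rw [integral_add hw hw.comp_neg, integral_neg_eq_self] at hsym
  rw [integral_comp_mul_sub_div hc hk (fun u => exp (-u ^ 2)), show √π / (2 * c) = √π / c / 2 by ring]
  linarith

end CauchySchlomilch

section Laplace

variable {a b : ℝ} (ha : 0 < a)
include ha

lemma mul_exp_neg_mul_heatKernel_sq {s : ℝ} (hs : 0 < s) :
    (2 * s) * (exp (-a * s ^ 2) * heatKernel (s ^ 2) b)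
      = 2 / √(2 * π) * exp (-√(2 * a) * b) * exp (-(√a * s - b / √2 / s) ^ 2) := by
  have h2 : √2 ^ 2 = 2 := sq_sqrt zero_le_two
  have hsa : √a ^ 2 = a := sq_sqrt ha.le
  have h2a : √(2 * a) = √2 * √a := sqrt_mul zero_le_two a
  have hexp : exp (-a * s ^ 2) * exp (-b ^ 2 / (2 * s ^ 2))
      = exp (-√(2 * a) * b) * exp (-(√a * s - b / √2 / s) ^ 2) := by
    rw [← exp_add, ← exp_add, h2a]
    congr 1
    field_simp
    linear_combination (2 * s ^ 2 * b * √2 * √a - b ^ 2) * h2 + 2 * s ^ 4 * √2 ^ 2 * hsa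
  rw [heatKernel, sqrt_mul (by positivity), sqrt_sq hs.le, mul_div_assoc', hexp]
  field_simp

lemma integrableOn_exp_neg_mul_heatKernel (hb : 0 < b) :
    IntegrableOn (fun t => exp (-a * t) * heatKernel t b) (Ioi 0) := by
  rw [← integrableOn_Ioi_comp_rpow_iff _ two_ne_zero]
  refine IntegrableOn.congr_fun ((integrableOn_exp_neg_sq_mul_sub_div (sqrt_pos.2 ha)
    (by positivity : 0 < b / √2)).const_mul (2 / √(2 * π) * exp (-√(2 * a) * b)))
    (fun s (hs : 0 < s) => ?_) measurableSet_Ioi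
  rw [show (2 : ℝ) - 1 = 1 by norm_num, rpow_one, rpow_two, abs_two, smul_eq_mul]
  exact (mul_exp_neg_mul_heatKernel_sq ha hs).symm

lemma integral_exp_neg_mul_heatKernel (hb : 0 < b) :
    ∫ t in Ioi 0, exp (-a * t) * heatKernel t b = exp (-√(2 * a) * b) / √(2 * a) := calc
  _ = ∫ s in Ioi 0, (2 * s ^ ((2 : ℝ) - 1)) • (exp (-a * s ^ (2 : ℝ)) * heatKernel (s ^ (2 : ℝ)) b) :=
    (integral_comp_rpow_Ioi_of_pos zero_lt_two).symm
  _ = ∫ s in Ioi 0, 2 / √(2 * π) * exp (-√(2 * a) * b) * exp (-(√a * s - b / √2 / s) ^ 2) :=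
    setIntegral_congr_fun measurableSet_Ioi fun s (hs : 0 < s) => by
      rw [show (2 : ℝ) - 1 = 1 by norm_num, rpow_one, rpow_two, smul_eq_mul]
      exact mul_exp_neg_mul_heatKernel_sq ha hs
  _ = 2 / √(2 * π) * exp (-√(2 * a) * b) * (√π / (2 * √a)) := by
    rw [integral_const_mul, integral_exp_neg_sq_mul_sub_div (sqrt_pos.2 ha) (by positivity)]
  _ = exp (-√(2 * a) * b) / √(2 * a) := by
    rw [sqrt_mul zero_le_two, sqrt_mul zero_le_two]
    field_simp

end Laplace

noncomputable def reflectedHeatKernel (t x y : ℝ) : ℝ := heatKernel t (y - x) + heatKernel t (y + x)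

section Reflected

variable {a x y : ℝ} (ha : 0 < a) (hxy : |x| < y)
include ha hxy

lemma integrableOn_exp_neg_mul_reflectedHeatKernel :
    IntegrableOn (fun t => exp (-a * t) * reflectedHeatKernel t x y) (Ioi 0) := by
  obtain ⟨hxy₁, hxy₂⟩ := abs_lt.1 hxy
  simp only [reflectedHeatKernel, mul_add]
  exact (integrableOn_exp_neg_mul_heatKernel ha (by linarith)).add
    (integrableOn_exp_neg_mul_heatKernel ha (by linarith))

lemma integral_exp_neg_mul_reflectedHeatKernel :
    ∫ t in Ioi 0, exp (-a * t) * reflectedHeatKernel t x y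
      = (exp (√(2 * a) * x) + exp (-√(2 * a) * x)) / √(2 * a) * exp (-√(2 * a) * y) := by
  obtain ⟨hxy₁, hxy₂⟩ := abs_lt.1 hxy
  simp only [reflectedHeatKernel, mul_add]
  rw [integral_add (integrableOn_exp_neg_mul_heatKernel ha (by linarith))
      (integrableOn_exp_neg_mul_heatKernel ha (by linarith)),
    integral_exp_neg_mul_heatKernel ha (by linarith),
    integral_exp_neg_mul_heatKernel ha (by linarith), mul_sub, mul_add, sub_eq_add_neg, exp_add,
    exp_add]
  simp only [neg_mul, neg_neg]
  ring

end Reflected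

section ExponentialMoment

variable {c : ℝ}

lemma hasDerivAt_neg_add_mul_exp_neg_mul (hc : c ≠ 0) (y : ℝ) :
    HasDerivAt (fun y => -(y / c + 1 / c ^ 2) * exp (-c * y)) (y * exp (-c * y)) y := by
  have h := (((hasDerivAt_id y).div_const c).add_const (1 / c ^ 2)).neg.mul
    (((hasDerivAt_id y).const_mul (-c)).exp)
  refine h.congr_deriv ?_
  simp only [id, Pi.neg_apply]
  field_simp
  ring

lemma tendsto_neg_add_mul_exp_neg_mul_atTop (hc : 0 < c) :
    Tendsto (fun y => -(y / c + 1 / c ^ 2) * exp (-c * y)) atTop (𝓝 0) := by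
  have h := ((tendsto_rpow_mul_exp_neg_mul_atTop_nhds_zero 1 c hc).div_const c).add
    ((tendsto_rpow_mul_exp_neg_mul_atTop_nhds_zero 0 c hc).div_const (c ^ 2))
  rw [zero_div, zero_div, add_zero] at h
  refine (neg_zero (G := ℝ) ▸ h.neg).congr fun y => ?_
  simp only [rpow_one, rpow_zero]
  ring

variable {r : ℝ} (hc : 0 < c) (hr : 0 ≤ r)
include hc hr

lemma integrableOn_Ioi_mul_exp_neg_mul : IntegrableOn (fun y => y * exp (-c * y)) (Ioi r) :=
  integrableOn_Ioi_deriv_of_nonneg' (fun y _ => hasDerivAt_neg_add_mul_exp_neg_mul hc.ne' y)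
    (fun y (hy : r < y) => by have := hr.trans hy.le; positivity)
    (tendsto_neg_add_mul_exp_neg_mul_atTop hc)

lemma integral_Ioi_mul_exp_neg_mul :
    ∫ y in Ioi r, y * exp (-c * y) = (r / c + 1 / c ^ 2) * exp (-c * r) := by
  rw [integral_Ioi_of_hasDerivAt_of_tendsto' (fun y _ => hasDerivAt_neg_add_mul_exp_neg_mul hc.ne' y)
    (integrableOn_Ioi_mul_exp_neg_mul hc hr) (tendsto_neg_add_mul_exp_neg_mul_atTop hc)]
  ring

end ExponentialMoment

lemma integral_integral_swap_of_nonneg {α β : Type*} [MeasurableSpace α] [MeasurableSpace β]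
    {μ : Measure α} {ν : Measure β} [SFinite μ] [SFinite ν] {f : α → β → ℝ}
    (hf : AEStronglyMeasurable (Function.uncurry f) (μ.prod ν))
    (hf_nonneg : ∀ᵐ y ∂ν, ∀ᵐ x ∂μ, 0 ≤ f x y) (hf_int : ∀ᵐ y ∂ν, Integrable (f · y) μ)
    (hF_int : Integrable (fun y => ∫ x, f x y ∂μ) ν) :
    ∫ x, ∫ y, f x y ∂ν ∂μ = ∫ y, ∫ x, f x y ∂μ ∂ν := by
  refine integral_integral_swap ((integrable_prod_iff' hf).2 ⟨hf_int, hF_int.congr ?_⟩)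
  filter_upwards [hf_nonneg] with y hy
  exact integral_congr_ae (hy.mono fun x hx => (norm_of_nonneg hx).symm)

/-- Resolvent integral for Brownian motion reflected at 0, for 0 ≤ x < x₀:
∫₀^∞ e^{-αt} ∫_{x₀}^∞ y (e^{-(y-x)²/(2t)} + e^{-(y+x)²/(2t)})/√(2πt) dy dt
  = (1/α)(1/(2√(2α)) + x₀/2) e^{-√(2α)x₀} (e^{√(2α)x} + e^{-√(2α)x}). -/
theorem stmt14 (α x x₀ : ℝ) (hα : 0 < α) (hx : 0 ≤ x) (hxx₀ : x < x₀) :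
    ∫ t in Ioi (0:ℝ), Real.exp (-α * t) *
        ∫ y in Ioi x₀,
          y * (Real.exp (-(y - x) ^ 2 / (2 * t)) + Real.exp (-(y + x) ^ 2 / (2 * t)))
            / Real.sqrt (2 * π * t)
      = (1 / α) * (1 / (2 * Real.sqrt (2 * α)) + x₀ / 2)
          * Real.exp (-Real.sqrt (2 * α) * x₀)
          * (Real.exp (Real.sqrt (2 * α) * x) + Real.exp (-Real.sqrt (2 * α) * x)) := by
  set c := √(2 * α) with hc_def
  have hc : 0 < c := sqrt_pos.2 (by positivity)
  have hx₀ : 0 < x₀ := hx.trans_lt hxx₀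
  have hxy : ∀ y ∈ Ioi x₀, |x| < y := fun y (hy : x₀ < y) => by rw [abs_of_nonneg hx]; linarith
  have h_inner : ∀ y ∈ Ioi x₀, ∫ t in Ioi 0, y * (exp (-α * t) * reflectedHeatKernel t x y)
      = (exp (c * x) + exp (-c * x)) / c * (y * exp (-c * y)) := fun y hy => by
    rw [integral_const_mul, integral_exp_neg_mul_reflectedHeatKernel hα (hxy y hy)]
    ring
  calc _ = ∫ t in Ioi 0, ∫ y in Ioi x₀, y * (exp (-α * t) * reflectedHeatKernel t x y) := by
        congr 1 with t
        rw [← integral_const_mul]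
        congr 1 with y
        rw [reflectedHeatKernel, heatKernel, heatKernel]
        ring
    _ = ∫ y in Ioi x₀, ∫ t in Ioi 0, y * (exp (-α * t) * reflectedHeatKernel t x y) := by
      refine integral_integral_swap_of_nonneg
        (by simp only [reflectedHeatKernel, heatKernel]; fun_prop) ?_ ?_ ?_
      · filter_upwards [ae_restrict_mem measurableSet_Ioi] with y (hy : x₀ < y)
        have hK := fun t => add_nonneg (heatKernel_nonneg t (y - x)) (heatKernel_nonneg t (y + x))
        exact ae_of_all _ fun t => mul_nonneg (by linarith) (mul_nonneg (exp_pos _).le (hK t))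
      · filter_upwards [ae_restrict_mem measurableSet_Ioi] with y hy
        exact (integrableOn_exp_neg_mul_reflectedHeatKernel hα (hxy y hy)).const_mul y
      · exact IntegrableOn.congr_fun ((integrableOn_Ioi_mul_exp_neg_mul hc hx₀.le).const_mul _)
          (fun y hy => (h_inner y hy).symm) measurableSet_Ioi
    _ = (exp (c * x) + exp (-c * x)) / c * ∫ y in Ioi x₀, y * exp (-c * y) := by
      rw [setIntegral_congr_fun measurableSet_Ioi h_inner, integral_const_mul]
    _ = _ := by
      have hα_eq : α = c ^ 2 / 2 := by rw [hc_def, sq_sqrt (by positivity)]; ring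
      rw [integral_Ioi_mul_exp_neg_mul hc hx₀.le, hα_eq]
      field_simp
      ring
end
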